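/- arXiv:2506.05157 — 7 statements merged into one kernel-verified Lean document; each statement's English description precedes it below -/
import Mathlib

section
/- Let n ≥ 3 and let α₁, …, αₙ ∈ (0, π) with α₁ + ⋯ + αₙ = π. Then cot α₁ + cot α₂ + ⋯ + cot αₙ > 0. -/
open Real

lemma my_cot_sub_pos {a b : ℝ} (ha : 0 < a) (hab : a < b) (hb : b < π) :
    Real.cot b < Real.cot a := by
  have hsa : 0 < Real.sin a := Real.sin_pos_of_pos_of_lt_pi ha (hab.trans hb)
  have hsb : 0 < Real.sin b := Real.sin_pos_of_pos_of_lt_pi (ha.trans hab) hb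
  rw [Real.cot_eq_cos_div_sin, Real.cot_eq_cos_div_sin, div_lt_div_iff₀ hsb hsa]
  have h : 0 < Real.sin (b - a) :=
    Real.sin_pos_of_pos_of_lt_pi (by linarith) (by linarith)
  rw [Real.sin_sub] at h
  nlinarith

lemma my_cot_pos {x : ℝ} (h0 : 0 < x) (h1 : x < π / 2) : 0 < Real.cot x := by
  rw [Real.cot_eq_cos_div_sin]
  have := Real.pi_pos
  exact div_pos (Real.cos_pos_of_mem_Ioo ⟨by linarith, h1⟩)
    (Real.sin_pos_of_pos_of_lt_pi h0 (by linarith))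

lemma my_cot_nonneg {x : ℝ} (h0 : 0 < x) (h1 : x ≤ π / 2) : 0 ≤ Real.cot x := by
  rw [Real.cot_eq_cos_div_sin]
  have := Real.pi_pos
  exact div_nonneg (Real.cos_nonneg_of_mem_Icc ⟨by linarith, h1⟩)
    (Real.sin_pos_of_pos_of_lt_pi h0 (by linarith)).le

lemma my_cot_pi_sub (x : ℝ) : Real.cot (π - x) = -Real.cot x := by
  rw [Real.cot_eq_cos_div_sin, Real.cot_eq_cos_div_sin, Real.cos_pi_sub,
    Real.sin_pi_sub, neg_div]

theorem sum_cot_pos_of_sum_eq_pi (n : ℕ) (hn : 3 ≤ n) (α : Fin n → ℝ)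
    (hα : ∀ i, α i ∈ Set.Ioo (0 : ℝ) π) (hsum : ∑ i, α i = π) :
    0 < ∑ i, Real.cot (α i) := by
  have hpos : ∀ i, 0 < α i := fun i => (hα i).1
  have hlt : ∀ i, α i < π := fun i => (hα i).2
  have : Nonempty (Fin n) := ⟨⟨0, by omega⟩⟩
  have hne : (Finset.univ : Finset (Fin n)).Nonempty := Finset.univ_nonempty
  by_cases hc : ∀ i, α i < π / 2
  · exact Finset.sum_pos (fun i _ => my_cot_pos (hpos i) (hc i)) hne
  · push_neg at hc
    obtain ⟨j, hj⟩ := hc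
    have hS : ∑ i ∈ Finset.univ.erase j, α i = π - α j := by
      rw [Finset.sum_erase_eq_sub (Finset.mem_univ j), hsum]
    -- each i ≠ j satisfies α i ≤ π - α j ≤ π/2
    have hSle : π - α j ≤ π / 2 := by linarith
    have hile : ∀ i ∈ Finset.univ.erase j, α i ≤ π - α j := by
      intro i hi
      rw [← hS]
      exact Finset.single_le_sum (fun k _ => (hpos k).le) hi
    -- find two distinct indices ≠ j
    have hcard : 1 < (Finset.univ.erase j).card := by
      rw [Finset.card_erase_of_mem (Finset.mem_univ j), Finset.card_univ, Fintype.card_fin]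
      omega
    obtain ⟨k, hk, k', hk', hkk'⟩ := Finset.one_lt_card.mp hcard
    have hkS : α k < π - α j := by
      have hsub : ({k, k'} : Finset (Fin n)) ⊆ Finset.univ.erase j := by
        intro x hx
        simp only [Finset.mem_insert, Finset.mem_singleton] at hx
        rcases hx with rfl | rfl <;> assumption
      have := Finset.sum_le_sum_of_subset_of_nonneg hsub
        (fun i _ _ => (hpos i).le)
      rw [Finset.sum_pair hkk', hS] at this
      have := hpos k'
      linarith
    -- cot (π - α j) < cot (α k)
    have hcotk : Real.cot (π - α j) < Real.cot (α k) := by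
      have := Real.pi_pos
      exact my_cot_sub_pos (hpos k) hkS (by linarith [hpos j])
    have hsplit : ∑ i, Real.cot (α i) =
        Real.cot (α j) + ∑ i ∈ Finset.univ.erase j, Real.cot (α i) :=
      (Finset.add_sum_erase _ (fun i => Real.cot (α i)) (Finset.mem_univ j)).symm
    have hsplit2 : ∑ i ∈ Finset.univ.erase j, Real.cot (α i) =
        Real.cot (α k) + ∑ i ∈ (Finset.univ.erase j).erase k, Real.cot (α i) :=
      (Finset.add_sum_erase _ (fun i => Real.cot (α i)) hk).symm
    have hrest : 0 ≤ ∑ i ∈ (Finset.univ.erase j).erase k, Real.cot (α i) := by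
      refine Finset.sum_nonneg fun i hi => ?_
      have hi' := Finset.mem_of_mem_erase hi
      exact my_cot_nonneg (hpos i) ((hile i hi').trans hSle)
    rw [my_cot_pi_sub] at hcotk
    rw [hsplit, hsplit2]
    linarith
end

section
/- Let n ≥ 3 and let α₁, …, αₙ ∈ (0, π) with α₁ + ⋯ + αₙ = (n−1)π. Then cot α₁ + cot α₂ + ⋯ + cot αₙ < 0. -/
open Real

lemma cot_eq_tan_shift (x : ℝ) : Real.cot x = Real.tan (π/2 - x) := by
  rw [Real.cot_eq_cos_div_sin, Real.tan_eq_sin_div_cos, Real.sin_pi_div_two_sub,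
    Real.cos_pi_div_two_sub]

lemma cot_lt_cot {x y : ℝ} (hx : 0 < x) (hy : y < π) (hxy : x < y) :
    Real.cot y < Real.cot x := by
  rw [cot_eq_tan_shift, cot_eq_tan_shift]
  apply Real.strictMonoOn_tan
  · constructor <;> [linarith; linarith]
  · constructor <;> [linarith; linarith]
  · linarith

lemma cot_pos' {x : ℝ} (hx : 0 < x) (hx2 : x < π/2) : 0 < Real.cot x := by
  rw [Real.cot_eq_cos_div_sin]
  exact div_pos (Real.cos_pos_of_mem_Ioo ⟨by linarith [Real.pi_pos], hx2⟩)
    (Real.sin_pos_of_pos_of_lt_pi hx (by linarith [Real.pi_pos]))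

lemma cot_pi_sub (x : ℝ) : Real.cot (π - x) = - Real.cot x := by
  rw [Real.cot_eq_cos_div_sin, Real.cot_eq_cos_div_sin, Real.cos_pi_sub, Real.sin_pi_sub,
    neg_div]

theorem sum_cot_neg_of_sum_eq_n_sub_one_pi (n : ℕ) (hn : 3 ≤ n) (α : Fin n → ℝ)
    (hα : ∀ i, α i ∈ Set.Ioo (0 : ℝ) π) (hsum : ∑ i, α i = (n - 1 : ℝ) * π) :
    ∑ i, Real.cot (α i) < 0 := by
  set β : Fin n → ℝ := fun i => π - α i with hβ
  clear_value β
  have hβ0 : ∀ i, 0 < β i := fun i => by simp [hβ]; exact (hα i).2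
  have hβπ : ∀ i, β i < π := fun i => by
    simp only [hβ]; have := (hα i).1; linarith
  have hβsum : ∑ i, β i = π := by
    have : ∑ i, β i = ∑ i : Fin n, π - ∑ i, α i := by
      rw [hβ, ← Finset.sum_sub_distrib]
    rw [this, hsum, Finset.sum_const, Finset.card_univ, Fintype.card_fin, nsmul_eq_mul]
    ring
  have hcot : ∀ i, Real.cot (α i) = - Real.cot (β i) := fun i => by
    have : α i = π - β i := by simp [hβ]
    rw [this, cot_pi_sub]
  -- pick j where β is max
  obtain ⟨j, -, hj⟩ := Finset.exists_max_image Finset.univ β ⟨⟨0, by omega⟩, Finset.mem_univ _⟩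
  -- erase j has at least 2 elements
  have hcard : 1 < (Finset.univ.erase j).card := by
    rw [Finset.card_erase_of_mem (Finset.mem_univ _), Finset.card_univ, Fintype.card_fin]
    omega
  obtain ⟨i, hi, hij⟩ := Finset.exists_mem_ne hcard j
  have hij' : i ≠ j := (Finset.mem_erase.mp hi).1
  -- key: for any k ≠ j, β k + β j < π
  have key : ∀ k, k ≠ j → β k + β j < π := by
    intro k hk
    obtain ⟨l, hl, hlk⟩ := Finset.exists_mem_ne hcard k
    have hlj : l ≠ j := (Finset.mem_erase.mp hl).1
    have hsub : ({k, j, l} : Finset (Fin n)) ⊆ Finset.univ := Finset.subset_univ _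
    have hs : β k + β j + β l ≤ ∑ x, β x := by
      have := Finset.sum_le_sum_of_subset_of_nonneg hsub
        (fun x _ _ => le_of_lt (hβ0 x))
      rwa [Finset.sum_insert (by simp [hk, hlk.symm]),
        Finset.sum_insert (by simp [hlj.symm]), Finset.sum_singleton, ← add_assoc] at this
    have := hβ0 l
    linarith [hβsum ▸ hs]
  -- each k ≠ j has β k < π/2
  have hhalf : ∀ k, k ≠ j → β k < π/2 := by
    intro k hk
    have h1 := key k hk
    have h2 := hj k (Finset.mem_univ k)
    linarith
  -- cot β i > - cot β j
  have hpair : - Real.cot (β j) < Real.cot (β i) := by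
    have h1 : β i < π - β j := by have := key i hij; linarith
    have := cot_lt_cot (hβ0 i) (by have := hβ0 j; linarith) h1
    rwa [cot_pi_sub] at this
  -- sum over remaining is nonneg
  have hrest : 0 ≤ ∑ k ∈ (Finset.univ.erase j).erase i, Real.cot (β k) := by
    apply Finset.sum_nonneg
    intro k hk
    have hkj : k ≠ j := (Finset.mem_erase.mp (Finset.mem_erase.mp hk).2).1
    exact le_of_lt (cot_pos' (hβ0 k) (hhalf k hkj))
  have hsum' : ∑ k, Real.cot (β k)
      = Real.cot (β j) + (Real.cot (β i) + ∑ k ∈ (Finset.univ.erase j).erase i, Real.cot (β k)) := by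
    rw [← Finset.add_sum_erase _ _ (Finset.mem_univ j),
      ← Finset.add_sum_erase _ _ (Finset.mem_erase.mpr ⟨hij, Finset.mem_univ i⟩)]
  have hpos : 0 < ∑ k, Real.cot (β k) := by
    rw [hsum']; linarith
  calc ∑ i, Real.cot (α i) = ∑ i, - Real.cot (β i) := by simp_rw [hcot]
    _ = - ∑ i, Real.cot (β i) := by rw [Finset.sum_neg_distrib]
    _ < 0 := by linarith
end

section
/- Let α₁ ∈ (0, π/2] and α₂, α₃ ∈ (π/2, π) satisfy α₁ ≤ π/2 < α₂ ≤ α₃ and α₁ + α₂ + α₃ = 2π. Then cot α₁ + cot α₃ < 0, and consequently cot α₁ + cot α₂ + cot α₃ < 0. -/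
open Real

theorem cot_sum_neg_two_pi_case (α₁ α₂ α₃ : ℝ)
    (h₁ : 0 < α₁) (h₁' : α₁ ≤ π / 2)
    (h₂ : π / 2 < α₂) (h₂₃ : α₂ ≤ α₃) (h₃ : α₃ < π)
    (hsum : α₁ + α₂ + α₃ = 2 * π) :
    Real.cot α₁ + Real.cot α₃ < 0 ∧
      Real.cot α₁ + Real.cot α₂ + Real.cot α₃ < 0 := by
  have hpi := Real.pi_pos
  have hs1 : 0 < Real.sin α₁ := Real.sin_pos_of_pos_of_lt_pi h₁ (by linarith)
  have hs2 : 0 < Real.sin α₂ := Real.sin_pos_of_pos_of_lt_pi (by linarith) (by linarith)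
  have hs3 : 0 < Real.sin α₃ := Real.sin_pos_of_pos_of_lt_pi (by linarith) h₃
  have hc2 : Real.cos α₂ < 0 := Real.cos_neg_of_pi_div_two_lt_of_lt h₂ (by linarith)
  have key : Real.cot α₁ + Real.cot α₃ < 0 := by
    rw [Real.cot_eq_cos_div_sin, Real.cot_eq_cos_div_sin, div_add_div _ _ (ne_of_gt hs1) (ne_of_gt hs3)]
    apply div_neg_of_neg_of_pos _ (mul_pos hs1 hs3)
    have : Real.cos α₁ * Real.sin α₃ + Real.sin α₁ * Real.cos α₃ = Real.sin (α₁ + α₃) := by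
      rw [Real.sin_add]; ring
    rw [this]
    have h13 : α₁ + α₃ = 2 * π - α₂ := by linarith
    rw [h13, Real.sin_sub, Real.sin_two_pi, Real.cos_two_pi]
    simpa using hs2
  have hcot2 : Real.cot α₂ < 0 := by
    rw [Real.cot_eq_cos_div_sin]
    exact div_neg_of_neg_of_pos hc2 hs2
  exact ⟨key, by linarith⟩
end

section
/- Let α₁, α₂, α₃ ∈ (0, π) with α₁ + α₂ + α₃ = π, and set zᵢ = 1 + cot αᵢ. Then a₀ := 2(z₁z₂ + z₂z₃ + z₁z₃)² − 4z₁z₂z₃ > 0. -/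
open Real

set_option maxHeartbeats 1600000 in
theorem a0_pos (α₁ α₂ α₃ : ℝ)
    (h₁ : α₁ ∈ Set.Ioo (0 : ℝ) π) (h₂ : α₂ ∈ Set.Ioo (0 : ℝ) π)
    (h₃ : α₃ ∈ Set.Ioo (0 : ℝ) π) (hsum : α₁ + α₂ + α₃ = π)
    (z₁ z₂ z₃ : ℝ)
    (hz₁ : z₁ = 1 + Real.cot α₁) (hz₂ : z₂ = 1 + Real.cot α₂)
    (hz₃ : z₃ = 1 + Real.cot α₃) :
    0 < 2 * (z₁ * z₂ + z₂ * z₃ + z₁ * z₃) ^ 2 - 4 * (z₁ * z₂ * z₃) := by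
  have s₁ : 0 < Real.sin α₁ := Real.sin_pos_of_pos_of_lt_pi h₁.1 h₁.2
  have s₂ : 0 < Real.sin α₂ := Real.sin_pos_of_pos_of_lt_pi h₂.1 h₂.2
  have s₃ : 0 < Real.sin α₃ := Real.sin_pos_of_pos_of_lt_pi h₃.1 h₃.2
  have e3 : α₃ = π - (α₁ + α₂) := by linarith
  have hcos3 : Real.cos α₃ = -(Real.cos α₁ * Real.cos α₂ - Real.sin α₁ * Real.sin α₂) := by
    rw [e3, Real.cos_pi_sub, Real.cos_add]
  have hsin3 : Real.sin α₃ = Real.sin α₁ * Real.cos α₂ + Real.cos α₁ * Real.sin α₂ := by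
    rw [e3, Real.sin_pi_sub, Real.sin_add]
  set c₁ := Real.cot α₁ with hc₁
  set c₂ := Real.cot α₂ with hc₂
  set c₃ := Real.cot α₃ with hc₃
  have hc₁' : c₁ = Real.cos α₁ / Real.sin α₁ := Real.cot_eq_cos_div_sin α₁
  have hc₂' : c₂ = Real.cos α₂ / Real.sin α₂ := Real.cot_eq_cos_div_sin α₂
  have hc₃' : c₃ = Real.cos α₃ / Real.sin α₃ := Real.cot_eq_cos_div_sin α₃
  clear hc₁ hc₂ hc₃
  clear_value c₁ c₂ c₃
  have hs3ne : Real.sin α₁ * Real.cos α₂ + Real.cos α₁ * Real.sin α₂ ≠ 0 := by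
    rw [← hsin3]; exact s₃.ne'
  have hid : c₁ * c₂ + c₂ * c₃ + c₃ * c₁ = 1 := by
    rw [hc₁', hc₂', hc₃', hcos3, hsin3]
    field_simp
    ring
  have h12 : c₁ + c₂ = Real.sin α₃ / (Real.sin α₁ * Real.sin α₂) := by
    rw [hc₁', hc₂', hsin3]
    field_simp
    ring
  have hp12 : 0 < c₁ + c₂ := by
    rw [h12]; positivity
  have h13 : c₁ + c₃ = Real.sin α₂ / (Real.sin α₁ * Real.sin α₃) := by
    have e2 : α₂ = π - (α₁ + α₃) := by linarith
    have : Real.sin α₂ = Real.sin α₁ * Real.cos α₃ + Real.cos α₁ * Real.sin α₃ := by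
      rw [e2, Real.sin_pi_sub, Real.sin_add]
    rw [hc₁', hc₃', this]
    field_simp
    ring
  have hp13 : 0 < c₁ + c₃ := by
    rw [h13]; positivity
  have h23 : c₂ + c₃ = Real.sin α₁ / (Real.sin α₂ * Real.sin α₃) := by
    have e1 : α₁ = π - (α₂ + α₃) := by linarith
    have : Real.sin α₁ = Real.sin α₂ * Real.cos α₃ + Real.cos α₂ * Real.sin α₃ := by
      rw [e1, Real.sin_pi_sub, Real.sin_add]
    rw [hc₂', hc₃', this]
    field_simp
    ring
  have hp23 : 0 < c₂ + c₃ := by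
    rw [h23]; positivity
  have hs : 0 < c₁ + c₂ + c₃ := by linarith
  have hp : 3 * (c₁*c₂*c₃) * (c₁+c₂+c₃) ≤ 1 := by
    nlinarith [hid, sq_nonneg (c₁*c₂ - c₂*c₃), sq_nonneg (c₂*c₃ - c₃*c₁),
      sq_nonneg (c₃*c₁ - c₁*c₂)]
  have hsq : 3 ≤ (c₁+c₂+c₃)^2 := by
    nlinarith [hid, sq_nonneg (c₁ - c₂), sq_nonneg (c₂ - c₃), sq_nonneg (c₃ - c₁)]
  have hs1 : 1 ≤ c₁ + c₂ + c₃ := by nlinarith [hsq, hs]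
  have hp3 : 3 * (c₁*c₂*c₃) ≤ 1 := by nlinarith [hp, hs1]
  have hgoal : c₁*c₂*c₃ < 2*(c₁+c₂+c₃)^2 + 7*(c₁+c₂+c₃) + 6 := by
    nlinarith [hp3, hs, sq_nonneg (c₁+c₂+c₃)]
  have hS : (1+c₁)*(1+c₂) + (1+c₂)*(1+c₃) + (1+c₁)*(1+c₃) = 4 + 2*(c₁+c₂+c₃) := by
    linear_combination hid
  have hP : (1+c₁)*(1+c₂)*(1+c₃) = 2 + (c₁+c₂+c₃) + c₁*c₂*c₃ := by
    linear_combination hid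
  rw [hz₁, hz₂, hz₃, hS, hP]
  nlinarith [hgoal]
end

section
/- Let α₁, α₂, α₃ ∈ (0, π) with α₁ + α₂ + α₃ = π and set zᵢ = 1 + cot αᵢ. Define a₂ = 2(z₁+z₂+z₃), a₁ = 2(z₁+z₂+z₃)² − 4, and a₀ = 2(z₁z₂+z₂z₃+z₁z₃)² − 4z₁z₂z₃. Then a₂ > 0, a₁ > 0, a₀ > 0, and a₂a₁ − a₀ > 0, so the cubic λ³ + a₂λ² + a₁λ + a₀ has all roots with strictly negative real part. -/
open Real

lemma amgm3' {u v w : ℝ} (hu : 0 ≤ u) (hv : 0 ≤ v) (hw : 0 ≤ w) :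
    27 * (u * v * w) ≤ (u + v + w) ^ 3 := by
  nlinarith [sq_nonneg (u - v), sq_nonneg (v - w), sq_nonneg (u - w),
    mul_nonneg hu hv, mul_nonneg hv hw, mul_nonneg hu hw,
    mul_nonneg (mul_nonneg hu hv) hw, sq_nonneg (u + v - w), sq_nonneg (v + w - u),
    sq_nonneg (u + w - v)]

lemma cot_add_pos' {a b : ℝ} (ha : 0 < a) (hb : 0 < b) (hab : a + b < π) :
    0 < Real.cot a + Real.cot b := by
  have hsa : 0 < Real.sin a := Real.sin_pos_of_pos_of_lt_pi ha (by linarith)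
  have hsb : 0 < Real.sin b := Real.sin_pos_of_pos_of_lt_pi hb (by linarith)
  have hsab : 0 < Real.sin (a + b) := Real.sin_pos_of_pos_of_lt_pi (by linarith) hab
  have : Real.cot a + Real.cot b = Real.sin (a + b) / (Real.sin a * Real.sin b) := by
    rw [Real.cot_eq_cos_div_sin, Real.cot_eq_cos_div_sin, Real.sin_add]
    field_simp
    ring
  rw [this]
  positivity

lemma key_ineq' (s p : ℝ) (hs1 : 1 < s) (hs2 : 3 ≤ s ^ 2)
    (hpub : 3 * p * s ≤ 1) (hplb : 27 * (s - p) ≤ 8 * s ^ 3) :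
    0 < 2 * (4 + 2 * s) ^ 2 - 4 * (2 + s + p) ∧
      2 * (4 + 2 * s) ^ 2 - 4 * (2 + s + p) < 2 * (3 + s) * (2 * (3 + s) ^ 2 - 4) := by
  have hsp : (0:ℝ) < s := by linarith
  constructor
  · nlinarith [hpub, hs1, hs2, mul_pos hsp hsp]
  · nlinarith [hplb, hs1, pow_pos hsp 3, mul_pos hsp hsp]

lemma hurwitz_cubic' (A B C : ℝ) (hA : 0 < A) (hB : 0 < B) (hC : 0 < C)
    (hABC : C < A * B) (lam : ℂ)
    (h : lam ^ 3 + (A : ℂ) * lam ^ 2 + (B : ℂ) * lam + (C : ℂ) = 0) : lam.re < 0 := by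
  by_contra hx
  push_neg at hx
  have hre : (lam ^ 3 + (A : ℂ) * lam ^ 2 + (B : ℂ) * lam + (C : ℂ)).re = 0 := by rw [h]; rfl
  have him : (lam ^ 3 + (A : ℂ) * lam ^ 2 + (B : ℂ) * lam + (C : ℂ)).im = 0 := by rw [h]; rfl
  simp [pow_succ, Complex.mul_re, Complex.mul_im] at hre him
  set x := lam.re with hxdef
  set y := lam.im with hydef
  rcases eq_or_ne y 0 with hy | hy
  · rw [hy] at hre
    nlinarith [hre, hx, hA, hB, hC, mul_nonneg hx hx,
      mul_nonneg (mul_nonneg hx hx) hx]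
  · have hy2 : y ^ 2 = 3 * x ^ 2 + 2 * A * x + B := by
      have h2 : y * (3 * x ^ 2 - y ^ 2 + 2 * A * x + B) = 0 := by nlinarith [him]
      rcases mul_eq_zero.mp h2 with h3 | h3
      · exact absurd h3 hy
      · linarith
    nlinarith [hre, hy2, hx, hA, hB, hC, mul_nonneg hx (le_of_lt hA),
      mul_nonneg (mul_nonneg hx hx) hx, mul_nonneg (mul_nonneg hx hx) hA.le,
      mul_nonneg hx hB.le, mul_nonneg (mul_nonneg hx hA.le) hA.le]

theorem cubic_hurwitz_n3 (α₁ α₂ α₃ : ℝ)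
    (h₁ : α₁ ∈ Set.Ioo (0 : ℝ) π) (h₂ : α₂ ∈ Set.Ioo (0 : ℝ) π)
    (h₃ : α₃ ∈ Set.Ioo (0 : ℝ) π) (hsum : α₁ + α₂ + α₃ = π)
    (z₁ z₂ z₃ a₂ a₁ a₀ : ℝ)
    (hz₁ : z₁ = 1 + Real.cot α₁) (hz₂ : z₂ = 1 + Real.cot α₂)
    (hz₃ : z₃ = 1 + Real.cot α₃)
    (ha₂ : a₂ = 2 * (z₁ + z₂ + z₃))
    (ha₁ : a₁ = 2 * (z₁ + z₂ + z₃) ^ 2 - 4)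
    (ha₀ : a₀ = 2 * (z₁ * z₂ + z₂ * z₃ + z₁ * z₃) ^ 2 - 4 * (z₁ * z₂ * z₃)) :
    0 < a₂ ∧ 0 < a₁ ∧ 0 < a₀ ∧ 0 < a₂ * a₁ - a₀ ∧
      ∀ lam : ℂ, lam ^ 3 + (a₂ : ℂ) * lam ^ 2 + (a₁ : ℂ) * lam + (a₀ : ℂ) = 0 →
        lam.re < 0 := by
  set x := Real.cot α₁ with hx
  set y := Real.cot α₂ with hy
  set z := Real.cot α₃ with hz
  -- the key trig identity
  have he2 : x * y + y * z + z * x = 1 := by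
    have hs1 : 0 < Real.sin α₁ := Real.sin_pos_of_pos_of_lt_pi h₁.1 h₁.2
    have hs2 : 0 < Real.sin α₂ := Real.sin_pos_of_pos_of_lt_pi h₂.1 h₂.2
    have hs3 : 0 < Real.sin α₃ := Real.sin_pos_of_pos_of_lt_pi h₃.1 h₃.2
    have h3eq : α₃ = π - (α₁ + α₂) := by linarith
    have hsin3 : Real.sin α₃ = Real.sin α₁ * Real.cos α₂ + Real.cos α₁ * Real.sin α₂ := by
      rw [h3eq, Real.sin_pi_sub, Real.sin_add]
    have hcos3 : Real.cos α₃ = Real.sin α₁ * Real.sin α₂ - Real.cos α₁ * Real.cos α₂ := by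
      rw [h3eq, Real.cos_pi_sub, Real.cos_add]; ring
    rw [hx, hy, hz, Real.cot_eq_cos_div_sin, Real.cot_eq_cos_div_sin, Real.cot_eq_cos_div_sin]
    field_simp
    rw [hsin3, hcos3]
    ring
  -- pairwise sums of cotangents are positive
  have hxy : 0 < x + y := cot_add_pos' h₁.1 h₂.1 (by linarith [h₃.1])
  have hyz : 0 < y + z := cot_add_pos' h₂.1 h₃.1 (by linarith [h₁.1])
  have hxz : 0 < x + z := by
    have := cot_add_pos' h₁.1 h₃.1 (by linarith [h₂.1])
    linarith
  have hs : 0 < x + y + z := by linarith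
  have hs2 : 3 ≤ (x + y + z) ^ 2 := by
    nlinarith [sq_nonneg (x - y), sq_nonneg (y - z), sq_nonneg (x - z)]
  have hs1 : 1 < x + y + z := by nlinarith
  -- upper bound on p = xyz :  e₂² ≥ 3 e₁ e₃
  have hpub : 3 * (x * y * z) * (x + y + z) ≤ 1 := by
    nlinarith [sq_nonneg (x * y - y * z), sq_nonneg (y * z - z * x), sq_nonneg (x * y - z * x)]
  -- lower bound on p via AM-GM on (x+y)(y+z)(z+x) = e₁e₂ - e₃
  have hplb : 27 * ((x + y + z) - x * y * z) ≤ 8 * (x + y + z) ^ 3 := by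
    have h1 := amgm3' hxy.le hyz.le hxz.le
    have h3 : (x + y) * (y + z) * (x + z) = (x + y + z) - x * y * z := by
      linear_combination (x + y + z) * he2
    have h4 : (x + y + (y + z) + (x + z)) ^ 3 = 8 * (x + y + z) ^ 3 := by ring
    rw [h3, h4] at h1
    linarith
  have hz123 : z₁ + z₂ + z₃ = 3 + (x + y + z) := by rw [hz₁, hz₂, hz₃]; ring
  have hzz : z₁ * z₂ + z₂ * z₃ + z₁ * z₃ = 4 + 2 * (x + y + z) := by
    rw [hz₁, hz₂, hz₃]; linear_combination he2
  have hzzz : z₁ * z₂ * z₃ = 2 + (x + y + z) + x * y * z := by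
    rw [hz₁, hz₂, hz₃]; linear_combination he2
  have hA : 0 < a₂ := by rw [ha₂, hz123]; linarith
  have hB : 0 < a₁ := by rw [ha₁, hz123]; nlinarith
  obtain ⟨k1, k2⟩ := key_ineq' (x + y + z) (x * y * z) hs1 hs2 hpub hplb
  have hC : 0 < a₀ := by rw [ha₀, hzz, hzzz]; exact k1
  have hABC : a₀ < a₂ * a₁ := by rw [ha₀, ha₂, ha₁, hz123, hzz, hzzz]; exact k2
  refine ⟨hA, hB, hC, by linarith, fun lam hlam => hurwitz_cubic' a₂ a₁ a₀ hA hB hC hABC lam hlam⟩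
end

section
/- Let n ≥ 2, z = 1 + cot(π/n), and P(λ) = (λ² + 2zλ + 2z²)ⁿ − (2z² − 2λ)ⁿ. Then P(0) = 0 and P(2i) = 0 and P(−2i) = 0, where i is the imaginary unit. -/
open Real Complex

theorem char_poly_imaginary_roots (n : ℕ) (hn : 2 ≤ n) (z : ℝ)
    (hz : z = 1 + Real.cot (π / n))
    (P : ℂ → ℂ)
    (hP : ∀ lam : ℂ, P lam =
      (lam ^ 2 + 2 * (z : ℂ) * lam + 2 * (z : ℂ) ^ 2) ^ n -
        (2 * (z : ℂ) ^ 2 - 2 * lam) ^ n) :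
    P 0 = 0 ∧ P (2 * Complex.I) = 0 ∧ P (-(2 * Complex.I)) = 0 := by
  have hn0 : (n : ℝ) ≠ 0 := by positivity
  set θ : ℝ := π / n with hθ
  have hθpos : 0 < θ := by
    apply div_pos Real.pi_pos
    positivity
  have hθlt : θ < π := by
    rw [hθ, div_lt_iff₀ (by positivity)]
    nlinarith [Real.pi_pos,
      mul_le_mul_of_nonneg_left (show (2:ℝ) ≤ n from by exact_mod_cast hn) Real.pi_pos.le]
  have hs : Real.sin θ ≠ 0 := ne_of_gt (Real.sin_pos_of_pos_of_lt_pi hθpos hθlt)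
  have hS : (Real.sin θ : ℂ) ≠ 0 := by exact_mod_cast hs
  set S : ℂ := (Real.sin θ : ℂ) with hSdef
  set C : ℂ := (Real.cos θ : ℂ) with hCdef
  have hpyth : S ^ 2 + C ^ 2 = 1 := by
    have := Real.sin_sq_add_cos_sq θ
    rw [hSdef, hCdef]
    exact_mod_cast this
  have hzS : (z : ℂ) * S = S + C := by
    have hr : z * Real.sin θ = Real.sin θ + Real.cos θ := by
      rw [hz, Real.cot_eq_cos_div_sin]; field_simp
    rw [hSdef, hCdef]
    exact_mod_cast hr
  -- the root of unity
  set w : ℂ := C + S * Complex.I with hw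
  have hwexp : w = Complex.exp (θ * Complex.I) := by
    rw [Complex.exp_mul_I, hw]
    simp [hSdef, hCdef, Complex.ofReal_cos, Complex.ofReal_sin]
  have hwpow : w ^ (2 * n) = 1 := by
    rw [hwexp, ← Complex.exp_nat_mul]
    have h2 : (↑(2 * n) : ℂ) * (↑θ * Complex.I) = 2 * ↑π * Complex.I := by
      have hθC : (θ : ℂ) = (π : ℂ) / n := by rw [hθ]; push_cast; ring
      have hnC : (n : ℂ) ≠ 0 := Nat.cast_ne_zero.mpr (by omega)
      rw [hθC]
      push_cast
      field_simp
    rw [h2, Complex.exp_two_pi_mul_I]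
  -- key algebraic identity, multiplied by S^2
  have hkey2 : ((2 * Complex.I) ^ 2 + 2 * (z : ℂ) * (2 * Complex.I) + 2 * (z : ℂ) ^ 2) * S ^ 2
      = ((2 * (z : ℂ) ^ 2 - 2 * (2 * Complex.I)) * w ^ 2) * S ^ 2 := by
    rw [hw]
    linear_combination
      (4 * Complex.I * S + 2 * ((z:ℂ) * S + S + C)
        - 2 * ((z:ℂ) * S + S + C) * (C + S * Complex.I) ^ 2) * hzS +
      (4 * S ^ 2 - 2 * S ^ 2 * C ^ 2 + 4 * S ^ 3 * C - 2 * S ^ 4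
        + 4 * S ^ 4 * Complex.I) * Complex.I_sq +
      (-2 * C ^ 2 - 4 * S * C - 4 * S * C * Complex.I + 2 * S ^ 2
        - 4 * S ^ 2 * Complex.I) * hpyth
  have hkey : ((2 * Complex.I) ^ 2 + 2 * (z : ℂ) * (2 * Complex.I) + 2 * (z : ℂ) ^ 2)
      = (2 * (z : ℂ) ^ 2 - 2 * (2 * Complex.I)) * w ^ 2 :=
    mul_right_cancel₀ (pow_ne_zero 2 hS) hkey2
  have hmain : ((2 * Complex.I) ^ 2 + 2 * (z : ℂ) * (2 * Complex.I) + 2 * (z : ℂ) ^ 2) ^ n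
      = (2 * (z : ℂ) ^ 2 - 2 * (2 * Complex.I)) ^ n := by
    rw [hkey, mul_pow, ← pow_mul, mul_comm 2 n, mul_comm n 2, hwpow, mul_one]
  refine ⟨?_, ?_, ?_⟩
  · rw [hP]; ring_nf
  · rw [hP, hmain, sub_self]
  · rw [hP]
    have hconj := congrArg (starRingEnd ℂ) hmain
    rw [map_pow, map_pow] at hconj
    simp only [map_add, map_sub, map_mul, map_pow, Complex.conj_I, Complex.conj_ofReal,
      map_ofNat] at hconj
    rw [sub_eq_zero]
    convert hconj using 3 <;> ring
end

section
/- Let β₀ ∈ (−π, π), β₀ ≠ −π, k ≠ 0, and let ᾱ = (π − β₀)/2 if k < 0 and ᾱ = (−π − β₀)/2 if k > 0. Define V(α) = ½(cos α + cos(α + β₀))² + ½(sin α + sin(α + β₀) − 2 sin ᾱ)². Then V(α) ≥ 0, V(α) = 0 iff α ≡ ᾱ (mod 2π) on [−π, π), and along solutions of α̇ = −k(cos α + cos(α + β₀)) one has V̇(α) = 2k sin ᾱ (cos α + cos(α + β₀))² ≤ 0. -/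
open Real

theorem lyapunov_two_vehicles (k β₀ abar : ℝ)
    (hk : k ≠ 0) (hβ₀ : β₀ ∈ Set.Ioo (-π) π)
    (habar_neg : k < 0 → abar = (π - β₀) / 2)
    (habar_pos : 0 < k → abar = (-π - β₀) / 2)
    (V : ℝ → ℝ)
    (hV : ∀ a : ℝ, V a =
      (1 / 2) * (Real.cos a + Real.cos (a + β₀)) ^ 2 +
        (1 / 2) * (Real.sin a + Real.sin (a + β₀) - 2 * Real.sin abar) ^ 2) :
    (∀ a : ℝ, 0 ≤ V a) ∧
    (∀ a : ℝ, a ∈ Set.Ico (-π) π → (V a = 0 ↔ a = abar)) ∧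
    (∀ α : ℝ → ℝ,
      (∀ t : ℝ, HasDerivAt α (-k * (Real.cos (α t) + Real.cos (α t + β₀))) t) →
      ∀ t : ℝ,
        HasDerivAt (fun u => V (α u))
          (2 * k * Real.sin abar * (Real.cos (α t) + Real.cos (α t + β₀)) ^ 2) t ∧
        2 * k * Real.sin abar * (Real.cos (α t) + Real.cos (α t + β₀)) ^ 2 ≤ 0) := by
  have hπ := Real.pi_pos
  have hcosβ : 0 < Real.cos (β₀ / 2) := by
    apply Real.cos_pos_of_mem_Ioo
    constructor
    · linarith [hβ₀.1]
    · linarith [hβ₀.2]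
  have hsin : (Real.sin abar = Real.cos (β₀ / 2) ∧ k < 0) ∨
      (Real.sin abar = -Real.cos (β₀ / 2) ∧ 0 < k) := by
    rcases hk.lt_or_gt with h | h
    · left
      refine ⟨?_, h⟩
      rw [habar_neg h, show (π - β₀) / 2 = π / 2 - β₀ / 2 by ring,
        Real.sin_pi_div_two_sub]
    · right
      refine ⟨?_, h⟩
      rw [habar_pos h, show (-π - β₀) / 2 = -(β₀ / 2 + π / 2) by ring,
        Real.sin_neg, Real.sin_add_pi_div_two]
  have hks : k * Real.sin abar < 0 := by
    rcases hsin with ⟨h1, h2⟩ | ⟨h1, h2⟩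
    · rw [h1]; exact mul_neg_of_neg_of_pos h2 hcosβ
    · rw [h1]; nlinarith
  refine ⟨fun a => by rw [hV]; positivity, ?_, ?_⟩
  · have E1 : ∀ x : ℝ, Real.cos x + Real.cos (x + β₀) =
        2 * Real.cos (x + β₀ / 2) * Real.cos (β₀ / 2) := by
      intro x
      have h1 : x = (x + β₀ / 2) - β₀ / 2 := by ring
      have h2 : x + β₀ = (x + β₀ / 2) + β₀ / 2 := by ring
      rw [h2, Real.cos_add]
      nth_rewrite 1 [h1]
      rw [Real.cos_sub]
      ring
    have E2 : ∀ x : ℝ, Real.sin x + Real.sin (x + β₀) =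
        2 * Real.sin (x + β₀ / 2) * Real.cos (β₀ / 2) := by
      intro x
      have h1 : x = (x + β₀ / 2) - β₀ / 2 := by ring
      have h2 : x + β₀ = (x + β₀ / 2) + β₀ / 2 := by ring
      rw [h2, Real.sin_add]
      nth_rewrite 1 [h1]
      rw [Real.sin_sub]
      ring
    intro a ha
    have e1 := E1 a
    have e2 := E2 a
    constructor
    · intro h0
      rw [hV a] at h0
      have h1 : Real.cos a + Real.cos (a + β₀) = 0 := by
        nlinarith [sq_nonneg (Real.cos a + Real.cos (a + β₀)),
          sq_nonneg (Real.sin a + Real.sin (a + β₀) - 2 * Real.sin abar)]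
      have h2 : Real.sin a + Real.sin (a + β₀) = 2 * Real.sin abar := by
        nlinarith [sq_nonneg (Real.cos a + Real.cos (a + β₀)),
          sq_nonneg (Real.sin a + Real.sin (a + β₀) - 2 * Real.sin abar)]
      rcases hsin with ⟨hs, hkk⟩ | ⟨hs, hkk⟩
      · have hs1 : Real.sin (a + β₀ / 2) = 1 := by
          rw [e2, hs] at h2
          have := mul_right_cancel₀ (ne_of_gt hcosβ)
            (by linarith : Real.sin (a + β₀ / 2) * Real.cos (β₀ / 2) =
              1 * Real.cos (β₀ / 2))
          linarith
        obtain ⟨n, hn⟩ := Real.sin_eq_one_iff.mp hs1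
        have hb1 := hβ₀.1
        have hb2 := hβ₀.2
        have ha1 := ha.1
        have ha2 := ha.2
        have hn0 : n = 0 := by
          have hlo : (-1 : ℝ) < n := by nlinarith
          have hhi : (n : ℝ) < 1 := by nlinarith
          have : (-1 : ℤ) < n := by exact_mod_cast hlo
          have : (n : ℤ) < 1 := by exact_mod_cast hhi
          omega
        rw [hn0] at hn
        push_cast at hn
        rw [habar_neg hkk]
        linarith
      · have hs1 : Real.sin (a + β₀ / 2) = -1 := by
          rw [e2, hs] at h2
          have := mul_right_cancel₀ (ne_of_gt hcosβ)
            (by linarith : Real.sin (a + β₀ / 2) * Real.cos (β₀ / 2) =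
              (-1) * Real.cos (β₀ / 2))
          linarith
        obtain ⟨n, hn⟩ := Real.sin_eq_neg_one_iff.mp hs1
        have hb1 := hβ₀.1
        have hb2 := hβ₀.2
        have ha1 := ha.1
        have ha2 := ha.2
        have hn0 : n = 0 := by
          have hlo : (-1 : ℝ) < n := by nlinarith
          have hhi : (n : ℝ) < 1 := by nlinarith
          have : (-1 : ℤ) < n := by exact_mod_cast hlo
          have : (n : ℤ) < 1 := by exact_mod_cast hhi
          omega
        rw [hn0] at hn
        push_cast at hn
        rw [habar_pos hkk]
        linarith
    · intro h
      rw [h, hV]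
      have e1 := E1 abar
      have e2 := E2 abar
      rcases hsin with ⟨hs, hkk⟩ | ⟨hs, hkk⟩
      · have hab : abar + β₀ / 2 = π / 2 := by rw [habar_neg hkk]; ring
        have c0 : Real.cos (abar + β₀ / 2) = 0 := by rw [hab, Real.cos_pi_div_two]
        have s0 : Real.sin (abar + β₀ / 2) = 1 := by rw [hab, Real.sin_pi_div_two]
        rw [e1, e2, c0, s0, hs]
        ring
      · have hab : abar + β₀ / 2 = -(π / 2) := by rw [habar_pos hkk]; ring
        have c0 : Real.cos (abar + β₀ / 2) = 0 := by
          rw [hab, Real.cos_neg, Real.cos_pi_div_two]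
        have s0 : Real.sin (abar + β₀ / 2) = -1 := by
          rw [hab, Real.sin_neg, Real.sin_pi_div_two]
        rw [e1, e2, c0, s0, hs]
        ring
  · intro α hα t
    constructor
    · have hVf : (fun u => V (α u)) = fun u =>
          (1 / 2) * (Real.cos (α u) + Real.cos (α u + β₀)) ^ 2 +
            (1 / 2) * (Real.sin (α u) + Real.sin (α u + β₀) - 2 * Real.sin abar) ^ 2 := by
        funext u; exact hV (α u)
      rw [hVf]
      set D := -k * (Real.cos (α t) + Real.cos (α t + β₀)) with hD
      have hc : HasDerivAt (fun u => Real.cos (α u) + Real.cos (α u + β₀))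
          (-Real.sin (α t) * D + -Real.sin (α t + β₀) * D) t :=
        (hα t).cos.add ((hα t).add_const β₀).cos
      have hs : HasDerivAt
          (fun u => Real.sin (α u) + Real.sin (α u + β₀) - 2 * Real.sin abar)
          (Real.cos (α t) * D + Real.cos (α t + β₀) * D) t :=
        ((hα t).sin.add ((hα t).add_const β₀).sin).sub_const _
      have := ((hc.pow 2).const_mul (1 / 2 : ℝ)).add ((hs.pow 2).const_mul (1 / 2 : ℝ))
      refine this.congr_deriv ?_
      rw [hD]
      push_cast
      ring
    · nlinarith [sq_nonneg (Real.cos (α t) + Real.cos (α t + β₀)), hks]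
end
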